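/- arXiv:1307.7806 — 4 statements merged into one kernel-verified Lean document; each statement's English description precedes it below -/
import Mathlib

section
/- Let G be a simple graph with at least 3 vertices and let G' be constructed as follows: pick a vertex x of G and split it into two copies a1, b1 (each adjacent to all neighbors of x, with no edge between a1 and b1); take two disjoint copies G1, G2 of this split graph, with a3, b3 the copies of a1, b1 in G2; add two new vertices a2, b2 and edges {a1,a2}, {a2,a3}, {b1,b2}, {b2,b3}. If G has a Hamiltonian cycle then G' has a Hamiltonian cycle. -/
/-
Rotate the Hamiltonian cycle of `G` to start at `x` and drop its last edge `u x`; rerouting that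
edge to the twin `b₁` of `x` gives a Hamiltonian path `a₁ ⋯ u b₁` of the split graph. Running this
path in the first copy, then `b₂`, then the same path backwards in the second copy, and closing up
through `a₂`, gives the Hamiltonian cycle `a₂ a₁ ⋯ b₁ b₂ b₃ ⋯ a₃ a₂` of `G'`.
-/

/-- The graph obtained from `G` by splitting the vertex `x` into two nonadjacent copies
(`Sum.inl x` and `Sum.inr ()`), each adjacent to all neighbors of `x`. -/
def splitVertex {V : Type*} (G : SimpleGraph V) (x : V) : SimpleGraph (V ⊕ Unit) :=
  SimpleGraph.fromRel (fun a b =>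
    match a, b with
    | Sum.inl u, Sum.inl v => G.Adj u v
    | Sum.inl u, Sum.inr _ => G.Adj u x
    | Sum.inr _, Sum.inl v => G.Adj x v
    | Sum.inr _, Sum.inr _ => False)

/-- Two disjoint copies (indexed by `Fin 2`) of the split graph, joined by two fresh vertices
`Sum.inr 0 = a₂` (adjacent to `a₁ = Sum.inl (0, Sum.inl x)` and `a₃ = Sum.inl (1, Sum.inl x)`)
and `Sum.inr 1 = b₂` (adjacent to `b₁ = Sum.inl (0, Sum.inr ())` and
`b₃ = Sum.inl (1, Sum.inr ())`). -/
def doubledGraph {V : Type*} (G : SimpleGraph V) (x : V) :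
    SimpleGraph ((Fin 2 × (V ⊕ Unit)) ⊕ Fin 2) :=
  SimpleGraph.fromRel (fun a b =>
    match a, b with
    | Sum.inl (i, u), Sum.inl (j, v) => i = j ∧ (splitVertex G x).Adj u v
    | Sum.inl (_, u), Sum.inr c => (c = 0 ∧ u = Sum.inl x) ∨ (c = 1 ∧ u = Sum.inr ())
    | Sum.inr _, _ => False)

namespace SimpleGraph.Walk

variable {V : Type*} [DecidableEq V] {G : SimpleGraph V}

lemma IsHamiltonianCycle.isHamiltonian_dropLast {u : V} {p : G.Walk u u}
    (hp : p.IsHamiltonianCycle) : p.dropLast.IsHamiltonian := by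
  refine hp.isCycle.isPath_dropLast.isHamiltonian_of_mem fun w => ?_
  rcases eq_or_ne w u with rfl | hw
  · exact start_mem_support _
  · have := hp.mem_support w
    rw [← support_dropLast_concat hp.isCycle.not_nil] at this
    simpa [hw] using this

lemma IsHamiltonian.isHamiltonianCycle_cons {u v : V} {p : G.Walk u v}
    (hp : p.IsHamiltonian) (h : G.Adj v u) (hlen : 1 < p.length) :
    (cons h p).IsHamiltonianCycle := by
  refine ⟨(cons_isCycle_iff p h).mpr ⟨hp.isPath, fun he => ?_⟩,
    fun w => by simpa [support_copy] using hp w⟩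
  have := hp.isPath.length_eq_one_of_mem_edges (Sym2.eq_swap ▸ he)
  omega

end SimpleGraph.Walk

section

open SimpleGraph Walk

variable {V : Type*} {G : SimpleGraph V} {x : V}

namespace splitVertex

variable (G x) in
def inlHom : G →g splitVertex G x :=
  ⟨Sum.inl, fun h => by rw [splitVertex, fromRel_adj]; exact ⟨by simp [h.ne], Or.inl h⟩⟩

lemma adj_inl_inr {u : V} (h : G.Adj u x) : (splitVertex G x).Adj (Sum.inl u) (Sum.inr ()) := by
  rw [splitVertex, fromRel_adj]
  exact ⟨by simp, Or.inl h⟩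

lemma exists_isHamiltonian [DecidableEq V] {y : V} {p : G.Walk x y} (hp : p.IsHamiltonian)
    (h : G.Adj y x) : ∃ q : (splitVertex G x).Walk (Sum.inl x) (Sum.inr ()), q.IsHamiltonian := by
  refine ⟨(p.map (inlHom G x)).concat (adj_inl_inr h), ?_⟩
  refine ((hp.isPath.map Sum.inl_injective).concat (by simp [inlHom]) _).isHamiltonian_of_mem ?_
  rintro (w | _) <;> simp [inlHom, hp.mem_support]

end splitVertex

namespace doubledGraph

variable (G x) in
def copy (i : Fin 2) : splitVertex G x →g doubledGraph G x :=
  ⟨fun u => Sum.inl (i, u), fun h => by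
    rw [doubledGraph, fromRel_adj]; exact ⟨by simp [h.ne], Or.inl ⟨rfl, h⟩⟩⟩

@[simp] lemma copy_apply (i : Fin 2) (u : V ⊕ Unit) : copy G x i u = Sum.inl (i, u) := rfl

lemma copy_injective (i : Fin 2) : Function.Injective (copy G x i) := fun _ _ h => by
  simpa using h

lemma adj_copy_inl_inr_zero (i : Fin 2) :
    (doubledGraph G x).Adj (copy G x i (Sum.inl x)) (Sum.inr 0) := by
  rw [copy_apply, doubledGraph, fromRel_adj]
  exact ⟨by simp, Or.inl (Or.inl ⟨rfl, rfl⟩)⟩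

lemma adj_copy_inr_inr_one (i : Fin 2) :
    (doubledGraph G x).Adj (copy G x i (Sum.inr ())) (Sum.inr 1) := by
  rw [copy_apply, doubledGraph, fromRel_adj]
  exact ⟨by simp, Or.inl (Or.inr ⟨rfl, rfl⟩)⟩

lemma exists_isHamiltonianCycle [DecidableEq V]
    {p : (splitVertex G x).Walk (Sum.inl x) (Sum.inr ())} (hp : p.IsHamiltonian) :
    ∃ c : (doubledGraph G x).Walk (Sum.inr 0) (Sum.inr 0), c.IsHamiltonianCycle := by
  -- `q` runs a₁ ⋯ b₁ b₂ b₃ ⋯ a₃ a₂, the second copy of `p` backwards.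
  let q := (p.map (copy G x 0)).append <| cons (adj_copy_inr_inr_one 0) <|
    cons (adj_copy_inr_inr_one 1).symm <|
      (p.map (copy G x 1)).reverse.concat (adj_copy_inl_inr_zero 1)
  have hsupp : q.support = p.support.map (copy G x 0) ++
      Sum.inr 1 :: (p.support.map (copy G x 1)).reverse ++ [Sum.inr 0] := by
    simp only [q, support_append, support_cons, support_concat, support_reverse, Walk.support_map]
    simp
  have hq : q.IsHamiltonian := by
    refine IsPath.isHamiltonian_of_mem ?_ ?_
    · rw [isPath_def, hsupp]
      have hnodup := hp.isPath.support_nodup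
      simp [List.nodup_append, hnodup.map (copy_injective _)]
    · intro z
      rw [hsupp]
      rcases z with ⟨i, w⟩ | i <;> fin_cases i <;> simp [hp.mem_support]
  refine ⟨_, hq.isHamiltonianCycle_cons (adj_copy_inl_inr_zero 0).symm ?_⟩
  rw [length_append, length_cons, length_cons]
  omega

end doubledGraph

end

theorem stmt_1_general {V : Type*} [DecidableEq V] (G : SimpleGraph V) (x : V)
    (a : V) (c : G.Walk a a) (hc : c.IsHamiltonianCycle) :
    ∃ (b : (Fin 2 × (V ⊕ Unit)) ⊕ Fin 2) (c' : (doubledGraph G x).Walk b b),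
      c'.IsHamiltonianCycle := by
  have hcx := hc.rotate (hc.mem_support x)
  obtain ⟨p, hp⟩ := splitVertex.exists_isHamiltonian hcx.isHamiltonian_dropLast
    (SimpleGraph.Walk.adj_penultimate hcx.isCycle.not_nil)
  exact ⟨_, doubledGraph.exists_isHamiltonianCycle hp⟩

/-- If `G` (with at least 3 vertices) has a Hamiltonian cycle, then the graph `G'` produced by the
splitting-and-doubling construction has a Hamiltonian cycle. -/
theorem stmt_1 {V : Type*} [Fintype V] [DecidableEq V] (G : SimpleGraph V)
    (hV : 3 ≤ Fintype.card V) (x : V)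
    (a : V) (c : G.Walk a a) (hc : c.IsHamiltonianCycle) :
    ∃ (b : (Fin 2 × (V ⊕ Unit)) ⊕ Fin 2) (c' : (doubledGraph G x).Walk b b),
      c'.IsHamiltonianCycle :=
  stmt_1_general G x a c hc
end

section
/- With G and G' as in the splitting-and-doubling construction (split a vertex of G into a1, b1; take two copies G1, G2; connect via new degree-2 vertices a2 between a1 and a3, and b2 between b1 and b3): if G has no Hamiltonian cycle, then G' has no Hamiltonian path. -/
namespace SimpleGraph.Walk

variable {W : Type*} {H : SimpleGraph W} [DecidableEq W]

lemma exists_eq_append_append_or {u v a b : W} (p : H.Walk u v) (ha : a ∈ p.support)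
    (hb : b ∈ p.support) :
    (∃ (s₁ : H.Walk u a) (m : H.Walk a b) (s₂ : H.Walk b v), p = s₁.append (m.append s₂)) ∨
      ∃ (s₁ : H.Walk u b) (m : H.Walk b a) (s₂ : H.Walk a v), p = s₁.append (m.append s₂) := by
  rw [← p.take_spec ha, mem_support_append_iff] at hb
  rcases hb with hb | hb
  · refine .inr ⟨(p.takeUntil a ha).takeUntil b hb, (p.takeUntil a ha).dropUntil b hb,
      p.dropUntil a ha, ?_⟩
    rw [append_assoc, take_spec, take_spec]
  · refine .inl ⟨p.takeUntil a ha, (p.dropUntil a ha).takeUntil b hb,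
      (p.dropUntil a ha).dropUntil b hb, ?_⟩
    rw [take_spec, take_spec]

end SimpleGraph.Walk

namespace splitVertex

open SimpleGraph Walk Sum

variable {V : Type*} {G : SimpleGraph V} {x : V}

def xCopy (x : V) : Fin 2 → V ⊕ Unit := ![inl x, inr ()]

def merge (G : SimpleGraph V) (x : V) : splitVertex G x →g G where
  toFun := Sum.elim id fun _ => x
  map_rel' {u v} h := by
    rw [splitVertex, fromRel_adj] at h
    rcases u with u | u <;> rcases v with v | v <;> simp_all [adj_comm]

lemma merge_xCopy (c : Fin 2) : merge G x (xCopy x c) = x := by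
  fin_cases c <;> rfl

lemma merge_injOn_compl (c : Fin 2) : Set.InjOn (merge G x) {xCopy x c}ᶜ := by
  rintro (u | u) hu (v | v) hv h <;> fin_cases c <;> simp_all [merge, xCopy]

theorem exists_isHamiltonianCycle [Fintype V] [DecidableEq V] (hV : 3 ≤ Fintype.card V)
    {c d : Fin 2} (w : (splitVertex G x).Walk (xCopy x c) (xCopy x d)) (hw : w.IsHamiltonian) :
    ∃ (a : V) (C : G.Walk a a), C.IsHamiltonianCycle := by
  set C : G.Walk x x := (w.map (merge G x)).copy (merge_xCopy c) (merge_xCopy d)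
  have hlen : C.length = Fintype.card V := by
    simp [C, hw.length_eq]
  have hnil : ¬ C.Nil := by
    rw [← length_eq_zero_iff]; omega
  refine ⟨x, C, isHamiltonianCycle_iff_isCycle_and_length_eq.mpr ⟨?_, hlen⟩⟩
  refine isCycle_iff_isPath_tail_and_le_length.mpr ⟨?_, by omega⟩
  have hnd := (isPath_def _).mp hw.isPath
  rw [← cons_tail_support, List.nodup_cons] at hnd
  rw [isPath_def, support_tail_of_not_nil _ hnil, support_copy, Walk.support_map, ← List.map_tail]
  exact hnd.2.map_on fun u hu v hv =>
    merge_injOn_compl c (ne_of_mem_of_not_mem hu hnd.1) (ne_of_mem_of_not_mem hv hnd.1)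

end splitVertex

namespace doubledGraph

open SimpleGraph Walk Sum splitVertex

variable {V : Type*} {G : SimpleGraph V} {x : V}

lemma adj_inl_inl {i j : Fin 2} {u v : V ⊕ Unit} :
    (doubledGraph G x).Adj (inl (i, u)) (inl (j, v)) ↔ i = j ∧ (splitVertex G x).Adj u v := by
  rw [doubledGraph, fromRel_adj]
  constructor
  · rintro ⟨-, ⟨rfl, h⟩ | ⟨rfl, h⟩⟩
    exacts [⟨rfl, h⟩, ⟨rfl, h.symm⟩]
  · rintro ⟨rfl, h⟩
    exact ⟨by simp [h.ne], .inl ⟨rfl, h⟩⟩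

lemma adj_inr {c : Fin 2} {a : (Fin 2 × (V ⊕ Unit)) ⊕ Fin 2} :
    (doubledGraph G x).Adj (inr c) a ↔ ∃ i, a = inl (i, xCopy x c) := by
  rw [doubledGraph, fromRel_adj]
  rcases a with ⟨i, u⟩ | e
  · fin_cases c <;> simp [xCopy, eq_comm]
  · simp

lemma exists_splitVertex_walk_of_isPath {i c : Fin 2} {y : V ⊕ Unit}
    (w : (doubledGraph G x).Walk (inl (i, y)) (inr c)) (hw : w.IsPath)
    (hc : ∀ e, inr e ∈ w.support → e = c) :
    ∃ w' : (splitVertex G x).Walk y (xCopy x c),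
      w.support = w'.support.map (fun z => inl (i, z)) ++ [inr c] := by
  suffices ∀ {a t} (w : (doubledGraph G x).Walk a t), w.IsPath → (∀ e, inr e ∈ w.support → e = c) →
      t = inr c → ∀ {y}, a = inl (i, y) → ∃ w' : (splitVertex G x).Walk y (xCopy x c),
        w.support = w'.support.map (fun z => inl (i, z)) ++ [inr c] from this w hw hc rfl rfl
  intro a t w
  induction w with
  | nil => rintro - - rfl - ⟨⟩
  | @cons a b _ h p ih =>
    rintro hw hc rfl y rfl
    rw [cons_isPath_iff] at hw
    rcases b with ⟨j, z⟩ | e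
    · obtain ⟨rfl, hyz⟩ := adj_inl_inl.mp h
      obtain ⟨w', hw'⟩ := ih hw.1 (fun e he => hc e (by simp [he])) rfl rfl
      exact ⟨.cons hyz w', by simp [hw']⟩
    · obtain rfl := hc e (by simp)
      obtain ⟨k, hk⟩ := adj_inr.mp h.symm
      obtain ⟨rfl, rfl⟩ := Prod.mk.inj (inl_injective hk)
      obtain rfl := (isPath_iff_nil.mp hw.1).eq_nil
      exact ⟨.nil, by simp⟩

variable [DecidableEq V]

lemma inl_xCopy_mem_support {u : (Fin 2 × (V ⊕ Unit)) ⊕ Fin 2} {i c : Fin 2} {y : V ⊕ Unit}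
    (s : (doubledGraph G x).Walk u (inr c)) (hs : s.IsPath)
    (hc : ∀ e, inr e ∈ s.support → e = c) (hy : inl (i, y) ∈ s.support) :
    inl (i, xCopy x c) ∈ s.support := by
  have hsub := s.support_dropUntil_subset_support hy
  obtain ⟨w, hw⟩ := exists_splitVertex_walk_of_isPath (s.dropUntil _ hy) (hs.dropUntil hy)
    fun e he => hc e (hsub he)
  exact hsub (by simp [hw])

lemma inl_xCopy_mem_support_tail {v : (Fin 2 × (V ⊕ Unit)) ⊕ Fin 2} {i d : Fin 2}
    {y : V ⊕ Unit} (s : (doubledGraph G x).Walk (inr d) v) (hs : s.IsPath)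
    (hd : ∀ e, inr e ∈ s.support → e = d) (hy : inl (i, y) ∈ s.support) :
    inl (i, xCopy x d) ∈ s.support.tail := by
  have h := inl_xCopy_mem_support s.reverse hs.reverse (by simpa using hd) (by simpa using hy)
  rw [support_reverse, List.mem_reverse, ← cons_tail_support, List.mem_cons] at h
  exact h.resolve_left (by simp)

theorem exists_isHamiltonian_splitVertex {u v : (Fin 2 × (V ⊕ Unit)) ⊕ Fin 2} {c d : Fin 2}
    (hcd : c ≠ d) (s₁ : (doubledGraph G x).Walk u (inr c))
    (m : (doubledGraph G x).Walk (inr c) (inr d)) (s₂ : (doubledGraph G x).Walk (inr d) v)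
    (hp : (s₁.append (m.append s₂)).IsHamiltonian) :
    ∃ w : (splitVertex G x).Walk (xCopy x c) (xCopy x d), w.IsHamiltonian := by
  obtain ⟨b, h, m, rfl⟩ := m.exists_eq_cons_of_ne (by simpa using hcd)
  obtain ⟨i, rfl⟩ := adj_inr.mp h
  have hsupp := (isPath_def _).mp hp.isPath
  rw [support_append, support_append, support_cons, List.cons_append, List.tail_cons] at hsupp
  obtain ⟨hs₁, hrest, hdisj₁⟩ := List.nodup_append'.mp hsupp
  obtain ⟨hm, hs₂, hdisj₂⟩ := List.nodup_append'.mp hrest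
  have hc : inr c ∈ s₁.support := s₁.end_mem_support
  have hd : inr d ∈ m.support := m.end_mem_support
  have hfin : ∀ e : Fin 2, e = c ∨ e = d := by omega
  have hs₁c : ∀ e, inr e ∈ s₁.support → e = c := fun e he =>
    (hfin e).resolve_right fun hed => hdisj₁ he (List.mem_append_left _ (hed ▸ hd))
  have hmd : ∀ e, inr e ∈ m.support → e = d := fun e he =>
    (hfin e).resolve_left fun hec => hdisj₁ hc (List.mem_append_left _ (hec ▸ he))
  have hs₂d : ∀ e, inr e ∈ s₂.support → e = d := by
    intro e he
    rw [← cons_tail_support, List.mem_cons] at he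
    refine (hfin e).resolve_left fun hec => ?_
    subst hec
    exact he.elim (fun h => hcd (inr_injective h)) (hdisj₁ hc ∘ List.mem_append_right _)
  have hs₂ : s₂.IsPath := by
    rw [isPath_def, ← cons_tail_support, List.nodup_cons]
    exact ⟨hdisj₂ hd, hs₂⟩
  obtain ⟨w, hw⟩ := exists_splitVertex_walk_of_isPath m ((isPath_def _).mpr hm) hmd
  refine ⟨w, IsPath.isHamiltonian_of_mem ?_ fun y => ?_⟩
  · rw [hw] at hm
    exact (isPath_def _).mpr ((List.nodup_append'.mp hm).1.of_map _)
  have hy := hp.mem_support (inl (i, y))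
  rw [support_append, support_append, support_cons, List.cons_append, List.tail_cons,
    List.mem_append, List.mem_append] at hy
  rcases hy with hy | hy | hy
  · exact (hdisj₁ (inl_xCopy_mem_support s₁ ((isPath_def _).mpr hs₁) hs₁c hy)
      (List.mem_append_left _ m.start_mem_support)).elim
  · simpa [hw] using hy
  · refine (hdisj₂ ?_ (inl_xCopy_mem_support_tail s₂ hs₂ hs₂d (List.mem_of_mem_tail hy))).elim
    simp [hw]

end doubledGraph

/-- If `G` (with at least 3 vertices) has no Hamiltonian cycle, then the graph `G'` produced by
the splitting-and-doubling construction has no Hamiltonian path. -/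
theorem stmt_2 {V : Type*} [Fintype V] [DecidableEq V] (G : SimpleGraph V)
    (hV : 3 ≤ Fintype.card V) (x : V)
    (hG : ¬ ∃ (a : V) (c : G.Walk a a), c.IsHamiltonianCycle) :
    ¬ ∃ (u v : (Fin 2 × (V ⊕ Unit)) ⊕ Fin 2) (p : (doubledGraph G x).Walk u v),
      p.IsHamiltonian := by
  rintro ⟨u, v, p, hp⟩
  rcases p.exists_eq_append_append_or (hp.mem_support (Sum.inr 0)) (hp.mem_support (Sum.inr 1))
    with ⟨s₁, m, s₂, rfl⟩ | ⟨s₁, m, s₂, rfl⟩ <;>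
  · obtain ⟨w, hw⟩ := doubledGraph.exists_isHamiltonian_splitVertex (by decide) s₁ m s₂ hp
    exact hG (splitVertex.exists_isHamiltonianCycle hV w hw)
end

section
/- For any binary string b of length l, the string enc(b) ++ [0,1,1,1,0] ++ enc(b) contains the substring 111 exactly once, namely at the center (positions 2l+1 through 2l+3, 0-indexed starting at 2l+1). -/
/-! Inside `enc b` the letter at each even position is followed by its negation, so no three
consecutive letters of `enc b` are equal. In `enc b ++ [0,1,1,1,0] ++ enc b` the zeros flanking
the middle `111` keep a run of ones from reaching into either copy of `enc b`, so that run is the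
only occurrence of `111`. -/

def enc (b : List Bool) : List Bool := b.flatMap (fun x => [x, !x])

def IsTrueTripleAt (s : List Bool) (i : ℕ) : Prop :=
  s[i]? = some true ∧ s[i + 1]? = some true ∧ s[i + 2]? = some true

theorem IsTrueTripleAt.append_left {s : List Bool} {i : ℕ} (h : IsTrueTripleAt s i)
    (t : List Bool) :
    IsTrueTripleAt (s ++ t) i := by
  obtain ⟨h₀, h₁, h₂⟩ := h
  have : i + 2 < s.length := (List.getElem?_eq_some_iff.mp h₂).1
  have hidx : ∀ n ≤ i + 2, (s ++ t)[n]? = s[n]? :=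
    fun n hn => List.getElem?_append_left (by omega)
  exact ⟨by rwa [hidx i (by omega)], by rwa [hidx (i + 1) (by omega)],
    by rwa [hidx (i + 2) le_rfl]⟩

theorem IsTrueTripleAt.append_right {t : List Bool} {j : ℕ} (h : IsTrueTripleAt t j)
    (s : List Bool) :
    IsTrueTripleAt (s ++ t) (s.length + j) := by
  have hidx : ∀ m, (s ++ t)[s.length + m]? = t[m]? :=
    fun m => by simp [List.getElem?_append_right]
  simpa only [IsTrueTripleAt, add_assoc, hidx] using h

theorem IsTrueTripleAt.of_append_false_cons {s t : List Bool} {i : ℕ}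
    (h : IsTrueTripleAt (s ++ false :: t) i) :
    IsTrueTripleAt s i ∨ ∃ j, i = s.length + 1 + j ∧ IsTrueTripleAt t j := by
  obtain ⟨h₀, h₁, h₂⟩ := h
  rcases lt_or_ge (i + 2) s.length with hi | hi
  · have hidx : ∀ n ≤ i + 2, (s ++ false :: t)[n]? = s[n]? :=
      fun n hn => List.getElem?_append_left (by omega)
    exact .inl ⟨by rwa [hidx i (by omega)] at h₀, by rwa [hidx (i + 1) (by omega)] at h₁,
      by rwa [hidx (i + 2) le_rfl] at h₂⟩
  rcases le_or_gt i s.length with hi' | hi'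
  · obtain h | h | h : i = s.length ∨ i + 1 = s.length ∨ i + 2 = s.length := by omega
    · simp [h] at h₀
    · simp [h] at h₁
    · simp [h] at h₂
  · obtain ⟨j, rfl⟩ : ∃ j, i = s.length + 1 + j := ⟨i - s.length - 1, by omega⟩
    have hidx : ∀ m, (s ++ false :: t)[s.length + 1 + m]? = t[m]? := fun m => by
      rw [List.getElem?_append_right (by omega), show s.length + 1 + m - s.length = m + 1 by omega]
      rfl
    refine .inr ⟨j, rfl, ?_⟩
    simpa only [IsTrueTripleAt, ← add_assoc, ← hidx] using And.intro h₀ (And.intro h₁ h₂)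

theorem isTrueTripleAt_three_true_iff {j : ℕ} :
    IsTrueTripleAt [true, true, true] j ↔ j = 0 := by
  rcases j with _ | j <;> simp [IsTrueTripleAt]

theorem enc_cons (x : Bool) (b : List Bool) : enc (x :: b) = x :: (!x) :: enc b := rfl

theorem length_enc (b : List Bool) : (enc b).length = 2 * b.length := by
  simp [enc, List.length_flatMap, mul_comm]

theorem enc_getElem?_two_mul_add_one (b : List Bool) (k : ℕ) :
    (enc b)[2 * k + 1]? = (enc b)[2 * k]?.map (!·) := by
  induction b generalizing k with
  | nil => rfl
  | cons x b ih =>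
    rcases k with _ | k
    · rfl
    · simpa [enc_cons, Nat.mul_succ] using ih k

theorem not_isTrueTripleAt_enc (b : List Bool) (i : ℕ) : ¬IsTrueTripleAt (enc b) i := by
  rintro ⟨h₀, h₁, h₂⟩
  obtain ⟨k, hk, hk'⟩ :
      ∃ k, (enc b)[2 * k]? = some true ∧ (enc b)[2 * k + 1]? = some true := by
    rcases Nat.even_or_odd' i with ⟨k, rfl | rfl⟩
    · exact ⟨k, h₀, h₁⟩
    · exact ⟨k + 1, by rwa [Nat.mul_succ], by rwa [Nat.mul_succ]⟩
  simp [enc_getElem?_two_mul_add_one, hk] at hk'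

/-- For a binary string `b` of length `l`, the string `enc(b) ++ [0,1,1,1,0] ++ enc(b)` contains
the substring `111` exactly once, namely starting at position `2l + 1` (0-indexed). -/
theorem stmt_8 (l : ℕ) (b : List Bool) (hb : b.length = l) :
    ∀ i : ℕ,
      ((enc b ++ [false, true, true, true, false] ++ enc b)[i]? = some true ∧
       (enc b ++ [false, true, true, true, false] ++ enc b)[i + 1]? = some true ∧
       (enc b ++ [false, true, true, true, false] ++ enc b)[i + 2]? = some true) ↔
      i = 2 * l + 1 := by
  intro i
  have split : enc b ++ [false, true, true, true, false] ++ enc b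
      = enc b ++ false :: ([true, true, true] ++ false :: enc b) := by simp
  change IsTrueTripleAt _ i ↔ _
  rw [split, ← hb, ← length_enc]
  constructor
  · intro h
    rcases h.of_append_false_cons with hleft | ⟨j, rfl, hrest⟩
    · exact absurd hleft (not_isTrueTripleAt_enc b i)
    rcases hrest.of_append_false_cons with hmid | ⟨k, -, hright⟩
    · rw [isTrueTripleAt_three_true_iff.mp hmid]
    · exact absurd hright (not_isTrueTripleAt_enc b k)
  · rintro rfl
    exact ((isTrueTripleAt_three_true_iff.mpr rfl).append_left _ |>.append_right [false])
      |>.append_right (enc b)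
end

section
/- If a pair of cyclic strings (s, t) of length n matches with shift d and also matches with shift d', and gcd(n, d − d') = g, then s is periodic with period g (i.e., s_{i} = s_{i+g} for all i, indices mod n). -/
/-!
Both matchings give `s (i + d) = t i = s (i + d')`, so `d - d'` is a period of `s`. By Bézout,
`gcd n (d - d')` is an integer multiple of `d - d'` in `ZMod n`, hence a period as well.
-/

theorem Function.periodic_sub_of_forall_add_eq {G A : Type*} [AddCommGroup G] {s : G → A}
    {a b : G} (h : ∀ x, s (x + a) = s (x + b)) : Function.Periodic s (a - b) := fun x => by
  simpa [sub_add_eq_add_sub, add_sub_assoc] using h (x - b)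

theorem ZMod.natCast_gcd_eq_gcdB_mul (n e : ℕ) :
    ((n.gcd e : ℕ) : ZMod n) = (n.gcdB e : ZMod n) * e := by
  have bezout := congrArg (Int.cast : ℤ → ZMod n) (Nat.gcd_eq_gcd_ab n e)
  push_cast [ZMod.natCast_self] at bezout
  rw [bezout, zero_mul, zero_add, mul_comm]

/-- If a pair of cyclic strings `(s, t)` of length `n` matches with shift `d` and also with
shift `d'`, and `gcd(n, d − d') = g`, then `s` is periodic with period `g`. -/
theorem stmt_10 {A : Type*} (n d d' : ℕ) (hdd : d' ≤ d) (s t : ZMod n → A)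
    (h : ∀ i : ZMod n, t i = s (i + (d : ZMod n)))
    (h' : ∀ i : ZMod n, t i = s (i + (d' : ZMod n)))
    (g : ℕ) (hg : g = Nat.gcd n (d - d')) :
    ∀ i : ZMod n, s i = s (i + (g : ZMod n)) := by
  have hper : Function.Periodic s ((d - d' : ℕ) : ZMod n) := by
    rw [Nat.cast_sub hdd]
    exact Function.periodic_sub_of_forall_add_eq fun i => (h i).symm.trans (h' i)
  intro i
  rw [hg, ZMod.natCast_gcd_eq_gcdB_mul]
  exact (hper.int_mul _ i).symm
end
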